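/- arXiv:1801.01313 — 3 statements merged into one kernel-verified Lean document; each statement's English description precedes it below -/
import Mathlib

section
/- For a nonnegative integer κ and y ∈ [−1,1], ∫_{−1}^{y} (1−z²)^κ dz = (1+y)^{κ+1} · ∑_{ν=0}^{κ} 2^ν C(κ,ν) · ν!(2κ−ν)!/(2κ+1)! · (1−y)^{κ−ν}. -/
/-!
Factor `(1 - z²)^κ = (1 + z)^κ (1 - z)^κ` and prove more generally a closed form for
`J a b y = ∫_{-1}^y (1 + z)^a (1 - z)^b dz`. Differentiating `(1 + z)^(a+1) (1 - z)^(b+1)` and writing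
`1 + z = 2 - (1 - z)` gives the recurrence `(a + b + 2) J a (b+1) = (1 + y)^(a+1) (1 - y)^(b+1) + 2 (b + 1) J a b`,
and unrolling it from `J a 0 = (1 + y)^(a+1) / (a + 1)` produces the coefficients
`2^ν b!/(b-ν)! (a+b-ν)!/(a+b+1)!`.
-/

open Finset

lemma integral_one_add_pow (a : ℕ) (y : ℝ) :
    ∫ z in (-1 : ℝ)..y, (1 + z) ^ a = (1 + y) ^ (a + 1) / (a + 1) := by
  simp [intervalIntegral.integral_comp_add_left (fun z : ℝ => z ^ a), integral_pow]

lemma hasDerivAt_one_add_pow_mul_one_sub_pow (a b : ℕ) (z : ℝ) :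
    HasDerivAt (fun t : ℝ => (1 + t) ^ (a + 1) * (1 - t) ^ (b + 1))
      ((a + b + 2) * ((1 + z) ^ a * (1 - z) ^ (b + 1)) - 2 * (b + 1) * ((1 + z) ^ a * (1 - z) ^ b))
      z := by
  refine ((((hasDerivAt_id z).const_add 1).fun_pow (a + 1)).fun_mul
    (((hasDerivAt_id z).const_sub 1).fun_pow (b + 1))).congr_deriv ?_
  simp only [id, Nat.add_sub_cancel]
  push_cast
  ring

lemma integral_one_add_pow_mul_one_sub_pow_succ (a b : ℕ) (y : ℝ) :
    (a + b + 2) * ∫ z in (-1 : ℝ)..y, (1 + z) ^ a * (1 - z) ^ (b + 1) =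
      (1 + y) ^ (a + 1) * (1 - y) ^ (b + 1) +
        2 * (b + 1) * ∫ z in (-1 : ℝ)..y, (1 + z) ^ a * (1 - z) ^ b := by
  have hftc := intervalIntegral.integral_eq_sub_of_hasDerivAt
    (fun z _ => hasDerivAt_one_add_pow_mul_one_sub_pow a b z) (a := -1) (b := y)
    (by apply Continuous.intervalIntegrable; fun_prop)
  rw [intervalIntegral.integral_sub (by apply Continuous.intervalIntegrable; fun_prop)
    (by apply Continuous.intervalIntegrable; fun_prop), intervalIntegral.integral_const_mul,
    intervalIntegral.integral_const_mul] at hftc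
  norm_num at hftc
  linarith

noncomputable def partialBetaCoeff (a b ν : ℕ) : ℝ :=
  2 ^ ν * b.descFactorial ν * (a + b - ν).factorial / (a + b + 1).factorial

lemma partialBetaCoeff_zero (a b : ℕ) : partialBetaCoeff a b 0 = 1 / (a + b + 1) := by
  rw [partialBetaCoeff, Nat.factorial_succ]
  push_cast
  field_simp
  simp

lemma partialBetaCoeff_succ_succ (a b ν : ℕ) :
    partialBetaCoeff a (b + 1) (ν + 1) = 2 * (b + 1) / (a + b + 2) * partialBetaCoeff a b ν := by
  rw [partialBetaCoeff, partialBetaCoeff, Nat.succ_descFactorial_succ,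
    show a + (b + 1) - (ν + 1) = a + b - ν by omega, show a + (b + 1) + 1 = a + b + 1 + 1 by ring,
    Nat.factorial_succ]
  push_cast
  field_simp
  ring

theorem integral_one_add_pow_mul_one_sub_pow (a b : ℕ) (y : ℝ) :
    ∫ z in (-1 : ℝ)..y, (1 + z) ^ a * (1 - z) ^ b =
      (1 + y) ^ (a + 1) * ∑ ν ∈ range (b + 1), partialBetaCoeff a b ν * (1 - y) ^ (b - ν) := by
  induction b with
  | zero => simp [integral_one_add_pow, partialBetaCoeff_zero, div_eq_mul_inv, mul_comm]
  | succ b ih =>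
    have hrec := integral_one_add_pow_mul_one_sub_pow_succ a b y
    rw [ih] at hrec
    have hpos : (a + b + 2 : ℝ) ≠ 0 := by positivity
    rw [sum_range_succ', partialBetaCoeff_zero]
    simp only [partialBetaCoeff_succ_succ, Nat.add_sub_add_right, mul_assoc, ← mul_sum]
    rw [← mul_right_inj' hpos, hrec, Nat.sub_zero]
    push_cast
    field_simp
    ring

theorem G_lambda_factored_general (κ : ℕ) (y : ℝ) :
    ∫ z in (-1 : ℝ)..y, (1 - z ^ 2) ^ κ =
      (1 + y) ^ (κ + 1) *
        ∑ ν ∈ Finset.range (κ + 1),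
          2 ^ ν * (κ.choose ν : ℝ) * (ν.factorial : ℝ) * ((2 * κ - ν).factorial : ℝ) /
            ((2 * κ + 1).factorial : ℝ) * (1 - y) ^ (κ - ν) := by
  have hfactor : ∀ z : ℝ, (1 - z ^ 2) ^ κ = (1 + z) ^ κ * (1 - z) ^ κ := fun z => by
    rw [← mul_pow]; ring
  simp_rw [hfactor, integral_one_add_pow_mul_one_sub_pow, partialBetaCoeff,
    Nat.descFactorial_eq_factorial_mul_choose, two_mul]
  congr 1
  refine sum_congr rfl fun ν _ => ?_
  push_cast
  ring

theorem G_lambda_factored (κ : ℕ) (y : ℝ) (hy : y ∈ Set.Icc (-1 : ℝ) 1) :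
    ∫ z in (-1 : ℝ)..y, (1 - z ^ 2) ^ κ =
      (1 + y) ^ (κ + 1) *
        ∑ ν ∈ Finset.range (κ + 1),
          2 ^ ν * (κ.choose ν : ℝ) * (ν.factorial : ℝ) * ((2 * κ - ν).factorial : ℝ) /
            ((2 * κ + 1).factorial : ℝ) * (1 - y) ^ (κ - ν) :=
  G_lambda_factored_general κ y
end

section
/- Let κ ≥ 1 be an integer and define g_ν = 2^ν C(κ,ν) (ν−1)!(2κ−ν)!/(2κ+1)! for 1 ≤ ν ≤ κ and g₀ = −1/(2κ+1). Then the function S(y) = g₀ ln((1−y)/2) + ∑_{ν=1}^{κ} g_ν (1−y)^{−ν} satisfies S'(y) = (1−y²)^{−κ−1} ∫_{−1}^{y} (1−z²)^κ dz for all y ∈ (−1,1). -/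
/-!
`∫_{-1}^y (1 - z²)^κ dz = (1 + y)^(κ+1) P(1 - y)` for the polynomial `P w = ∑_{j ≤ κ} c_j w^j`
with `c_j = 2^κ κ! (κ+j)! / (2^j j! (2κ+1)!)`: differentiating, this amounts to the ODE
`(κ+1) P(w) - (2 - w) P'(w) = w^κ`, which on coefficients is the two-term recurrence
`2 (j+1) c_{j+1} = (κ+1+j) c_j` together with `(2κ+1) c_κ = 1`. Dividing by `(1 - y²)^(κ+1)`
leaves `∑_j c_j (1 - y)^(j-κ-1)`, and since `c_{κ-ν} = ν g_ν` and `c_κ = -g₀` this is the termwise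
derivative of `S`.
-/

open Finset Real
open scoped Nat

noncomputable def primitiveCoeff (κ j : ℕ) : ℝ :=
  2 ^ κ * κ ! * (κ + j)! / (2 ^ j * j ! * (2 * κ + 1)!)

noncomputable def primitiveOneSubSqPow (κ : ℕ) (y : ℝ) : ℝ :=
  (1 + y) ^ (κ + 1) * ∑ j ∈ range (κ + 1), primitiveCoeff κ j * (1 - y) ^ j

theorem hasDerivAt_sum_range_mul_pow {𝕜 : Type*} [NontriviallyNormedField 𝕜]
    (a : ℕ → 𝕜) (n : ℕ) (w : 𝕜) :
    HasDerivAt (fun w => ∑ j ∈ range (n + 1), a j * w ^ j)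
      (∑ j ∈ range n, (j + 1) * a (j + 1) * w ^ j) w := by
  refine (HasDerivAt.fun_sum (u := range (n + 1)) fun j _ =>
    (hasDerivAt_pow j w).const_mul (a j)).congr_deriv ?_
  rw [sum_range_succ']
  simp only [Nat.cast_zero, zero_mul, mul_zero, add_zero, Nat.add_sub_cancel, Nat.cast_succ]
  exact sum_congr rfl fun j _ => by ring

section

variable (κ : ℕ)

theorem primitiveCoeff_succ (j : ℕ) :
    2 * (j + 1) * primitiveCoeff κ (j + 1) = (κ + 1 + j) * primitiveCoeff κ j := by
  unfold primitiveCoeff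
  rw [← add_assoc, Nat.factorial_succ, Nat.factorial_succ]
  push_cast
  field_simp
  ring

theorem primitiveCoeff_self : primitiveCoeff κ κ = (2 * (κ : ℝ) + 1)⁻¹ := by
  unfold primitiveCoeff
  rw [← two_mul, Nat.factorial_succ]
  push_cast
  field_simp

theorem primitiveCoeff_sub {ν : ℕ} (h₁ : 1 ≤ ν) (h₂ : ν ≤ κ) :
    primitiveCoeff κ (κ - ν) =
      ν * (2 ^ ν * κ.choose ν * (ν - 1)! * (2 * κ - ν)! / (2 * κ + 1)!) := by
  obtain ⟨m, rfl⟩ := Nat.exists_eq_add_of_le h₂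
  have hchoose : ((ν + m).choose ν : ℝ) * ν ! * m ! = (ν + m)! := by
    rw [Nat.choose_symm_add]
    exact_mod_cast Nat.add_choose_mul_factorial_mul_factorial ν m
  have hfact : (ν : ℝ) * (ν - 1)! = ν ! := by
    exact_mod_cast Nat.mul_factorial_pred (by omega)
  unfold primitiveCoeff
  rw [show ν + m - ν = m by omega, show ν + m + m = 2 * (ν + m) - ν by omega]
  field_simp
  rw [← hchoose, ← hfact, pow_add]
  ring

theorem primitiveCoeff_ode (w : ℝ) :
    (κ + 1) * ∑ j ∈ range (κ + 1), primitiveCoeff κ j * w ^ j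
      - (2 - w) * ∑ j ∈ range κ, (j + 1) * primitiveCoeff κ (j + 1) * w ^ j = w ^ κ := by
  set c := primitiveCoeff κ
  have hshift : w * ∑ j ∈ range κ, (j + 1) * c (j + 1) * w ^ j
      = ∑ j ∈ range (κ + 1), j * c j * w ^ j := by
    rw [sum_range_succ', mul_sum]
    simp only [Nat.cast_zero, zero_mul, add_zero, Nat.cast_succ]
    exact sum_congr rfl fun j _ => by ring
  have hrec : 2 * ∑ j ∈ range κ, (j + 1) * c (j + 1) * w ^ j
      = ∑ j ∈ range κ, (κ + 1 + j) * c j * w ^ j := by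
    rw [mul_sum]
    exact sum_congr rfl fun j _ => by rw [← primitiveCoeff_succ]; ring
  have hsplit : ∑ j ∈ range (κ + 1), (κ + 1 + j) * c j * w ^ j
      = (κ + 1) * ∑ j ∈ range (κ + 1), c j * w ^ j + ∑ j ∈ range (κ + 1), j * c j * w ^ j := by
    rw [mul_sum, ← sum_add_distrib]
    exact sum_congr rfl fun j _ => by ring
  have htop : (2 * κ + 1) * c κ = 1 := by
    rw [show c κ = _ from primitiveCoeff_self κ]
    field_simp
  rw [sum_range_succ] at hsplit
  linear_combination hshift - hrec - hsplit + w ^ κ * htop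

theorem hasDerivAt_primitiveOneSubSqPow (z : ℝ) :
    HasDerivAt (primitiveOneSubSqPow κ) ((1 - z ^ 2) ^ κ) z := by
  have hP : HasDerivAt (fun z => ∑ j ∈ range (κ + 1), primitiveCoeff κ j * (1 - z) ^ j)
      ((∑ j ∈ range κ, (j + 1) * primitiveCoeff κ (j + 1) * (1 - z) ^ j) * -1) z :=
    (hasDerivAt_sum_range_mul_pow (primitiveCoeff κ) κ (1 - z)).comp z
      ((hasDerivAt_id' z).const_sub 1)
  have hA : HasDerivAt (fun z => (1 + z) ^ (κ + 1)) ((κ + 1 : ℕ) * (1 + z) ^ κ * 1) z :=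
    ((hasDerivAt_id' z).const_add 1).fun_pow (κ + 1)
  refine (hA.mul hP).congr_deriv ?_
  rw [show 1 - z ^ 2 = (1 + z) * (1 - z) by ring, mul_pow]
  push_cast
  linear_combination (1 + z) ^ κ * primitiveCoeff_ode κ (1 - z)

theorem integral_one_sub_sq_pow (y : ℝ) :
    ∫ z in (-1 : ℝ)..y, (1 - z ^ 2) ^ κ = primitiveOneSubSqPow κ y := by
  rw [intervalIntegral.integral_eq_sub_of_hasDerivAt
    (fun z _ => hasDerivAt_primitiveOneSubSqPow κ z)
    ((by fun_prop : Continuous fun z : ℝ => (1 - z ^ 2) ^ κ).intervalIntegrable _ _)]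
  simp [primitiveOneSubSqPow]

theorem one_sub_sq_zpow_mul_primitiveOneSubSqPow {y : ℝ} (h₁ : -1 < y) (h₂ : y < 1) :
    (1 - y ^ 2) ^ (-(κ : ℤ) - 1) * primitiveOneSubSqPow κ y
      = primitiveCoeff κ κ * (1 - y)⁻¹
        + ∑ ν ∈ Icc 1 κ, primitiveCoeff κ (κ - ν) * (1 - y) ^ (-(ν : ℤ) - 1) := by
  have hw : 1 - y ≠ 0 := (sub_pos.2 h₂).ne'
  have hv : 1 + y ≠ 0 := by linarith
  have hcancel : (1 - y ^ 2) ^ (-(κ : ℤ) - 1) * (1 + y) ^ (κ + 1) = (1 - y) ^ (-(κ : ℤ) - 1) := by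
    rw [show 1 - y ^ 2 = (1 - y) * (1 + y) by ring, mul_zpow, mul_assoc, ← zpow_natCast,
      ← zpow_add₀ hv]
    simp
  have hterm : ∀ ν ∈ range (κ + 1),
      (1 - y) ^ (-(κ : ℤ) - 1) * (primitiveCoeff κ (κ - ν) * (1 - y) ^ (κ - ν))
        = primitiveCoeff κ (κ - ν) * (1 - y) ^ (-(ν : ℤ) - 1) := by
    intro ν hν
    rw [mul_left_comm, ← zpow_natCast, ← zpow_add₀ hw,
      Nat.cast_sub (Nat.le_of_lt_succ (mem_range.1 hν))]
    congr 2
    ring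
  have hrange : range (κ + 1) = insert 0 (Icc 1 κ) := by
    ext
    simp only [mem_range, mem_insert, mem_Icc]
    omega
  rw [primitiveOneSubSqPow, ← mul_assoc, hcancel, ← sum_range_reflect]
  simp only [add_tsub_cancel_right]
  rw [mul_sum, sum_congr rfl hterm, hrange, sum_insert (by simp)]
  simp

end

theorem hasDerivAt_log_add_sum_zpow (c : ℕ → ℝ) (n : ℕ) {y : ℝ} (hy : y < 1) :
    HasDerivAt (fun t => c 0 * log ((1 - t) / 2) + ∑ ν ∈ Icc 1 n, c ν * (1 - t) ^ (-(ν : ℤ)))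
      (-c 0 * (1 - y)⁻¹ + ∑ ν ∈ Icc 1 n, ν * c ν * (1 - y) ^ (-(ν : ℤ) - 1)) y := by
  have hw : 1 - y ≠ 0 := (sub_pos.2 hy).ne'
  have hsub := (hasDerivAt_id' y).const_sub 1
  refine HasDerivAt.add ?_ (HasDerivAt.fun_sum fun ν _ => ?_)
  · refine (((hsub.div_const 2).log (by simpa using hw)).const_mul (c 0)).congr_deriv ?_
    field_simp
  · refine (((hasDerivAt_zpow _ _ (Or.inl hw)).comp y hsub).const_mul (c ν)).congr_deriv ?_
    push_cast
    ring

theorem S_deriv_general (κ : ℕ) (g : ℕ → ℝ)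
    (hg0 : g 0 = -1 / (2 * (κ : ℝ) + 1))
    (hg : ∀ ν, 1 ≤ ν → ν ≤ κ →
      g ν = 2 ^ ν * (κ.choose ν : ℝ) * ((ν - 1).factorial : ℝ) * ((2 * κ - ν).factorial : ℝ) /
        ((2 * κ + 1).factorial : ℝ))
    (y : ℝ) (hy : y ∈ Set.Ioo (-1 : ℝ) 1) :
    HasDerivAt
      (fun t : ℝ => g 0 * Real.log ((1 - t) / 2) + ∑ ν ∈ Finset.Icc 1 κ, g ν * (1 - t) ^ (-(ν : ℤ)))
      ((1 - y ^ 2) ^ (-(κ : ℤ) - 1) * ∫ z in (-1 : ℝ)..y, (1 - z ^ 2) ^ κ) y := by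
  obtain ⟨hy₁, hy₂⟩ := hy
  rw [integral_one_sub_sq_pow, one_sub_sq_zpow_mul_primitiveOneSubSqPow κ hy₁ hy₂,
    primitiveCoeff_self]
  convert hasDerivAt_log_add_sum_zpow g κ hy₂ using 2
  · rw [hg0]
    ring
  · refine sum_congr rfl fun ν hν => ?_
    obtain ⟨h₁, h₂⟩ := mem_Icc.1 hν
    rw [primitiveCoeff_sub κ h₁ h₂, hg ν h₁ h₂]

theorem S_deriv (κ : ℕ) (hκ : 1 ≤ κ) (g : ℕ → ℝ)
    (hg0 : g 0 = -1 / (2 * (κ : ℝ) + 1))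
    (hg : ∀ ν, 1 ≤ ν → ν ≤ κ →
      g ν = 2 ^ ν * (κ.choose ν : ℝ) * ((ν - 1).factorial : ℝ) * ((2 * κ - ν).factorial : ℝ) /
        ((2 * κ + 1).factorial : ℝ))
    (y : ℝ) (hy : y ∈ Set.Ioo (-1 : ℝ) 1) :
    HasDerivAt
      (fun t : ℝ => g 0 * Real.log ((1 - t) / 2) + ∑ ν ∈ Finset.Icc 1 κ, g ν * (1 - t) ^ (-(ν : ℤ)))
      ((1 - y ^ 2) ^ (-(κ : ℤ) - 1) * ∫ z in (-1 : ℝ)..y, (1 - z ^ 2) ^ κ) y :=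
  S_deriv_general κ g hg0 hg y hy
end

section
/- For every positive integer n and real λ > 0, the Gegenbauer polynomial C_n^λ satisfies ∫_{x}^{1} (1−y²)^{−λ−1/2} ∫_{y}^{1} (1−z²)^{λ−1/2} C_n^λ(z) dz dy = (C_n^λ(1) − C_n^λ(x)) / (n(n+2λ)) for all x ∈ (−1,1). -/
/-!
With `w_μ(z) = (1 - z²)^μ`, the Gegenbauer equation
`(1 - z²) C'' - (2λ + 1) z C' + n (n + 2λ) C = 0` is the Sturm–Liouville identity
`(w_{λ+1/2} C')' = -n (n + 2λ) w_{λ-1/2} C` on `(-1, 1)`. Integrating it over `[y, 1]`, where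
the boundary term at `1` vanishes because `λ + 1/2 > 0`, gives
`∫_y^1 w_{λ-1/2} C = w_{λ+1/2}(y) C'(y) / (n (n + 2λ))`; the outer weight cancels `w_{λ+1/2}(y)`
and the outer integral becomes `∫_x^1 C' / (n (n + 2λ))`.

The Gegenbauer equation itself comes from differentiating
`(1 - x²) C'_{n+1} = (n + 2λ) C_n - (n + 1) x C_{n+1}`, which together with
`x C'_{n+1} - C'_n = (n + 1) C_{n+1}` follows by induction from the three-term recurrence.
-/

/-- The Gegenbauer (ultraspherical) polynomial `C_n^lam`, defined via the standard
three-term recurrence `(n+2) C_{n+2}(x) = 2 (n+1+lam) x C_{n+1}(x) - (n+2 lam) C_n(x)`,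
with `C_0 = 1` and `C_1(x) = 2 lam x`. -/
noncomputable def gegenbauer (lam : ℝ) : ℕ → ℝ → ℝ
  | 0, _ => 1
  | 1, x => 2 * lam * x
  | (n + 2), x =>
      (2 * ((n : ℝ) + 1 + lam) * x * gegenbauer lam (n + 1) x
        - ((n : ℝ) + 2 * lam) * gegenbauer lam n x) / ((n : ℝ) + 2)

open Set

section Gegenbauer

variable (lam : ℝ)

theorem gegenbauer_zero : gegenbauer lam 0 = fun _ => 1 := rfl

theorem gegenbauer_one : gegenbauer lam 1 = fun x => 2 * lam * x := rfl

theorem gegenbauer_add_two (n : ℕ) :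
    gegenbauer lam (n + 2) = fun x =>
      (2 * ((n : ℝ) + 1 + lam) * x * gegenbauer lam (n + 1) x
        - ((n : ℝ) + 2 * lam) * gegenbauer lam n x) / ((n : ℝ) + 2) := rfl

theorem contDiff_gegenbauer (n : ℕ) {k : WithTop ℕ∞} : ContDiff ℝ k (gegenbauer lam n) := by
  induction n using Nat.twoStepInduction with
  | zero => exact contDiff_const
  | one => rw [gegenbauer_one]; fun_prop
  | more n h₀ h₁ => rw [gegenbauer_add_two]; fun_prop

theorem differentiable_gegenbauer (n : ℕ) : Differentiable ℝ (gegenbauer lam n) :=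
  (contDiff_gegenbauer lam n (k := 1)).differentiable one_ne_zero

theorem deriv_gegenbauer_add_two (n : ℕ) (x : ℝ) :
    deriv (gegenbauer lam (n + 2)) x =
      (2 * ((n : ℝ) + 1 + lam) * (gegenbauer lam (n + 1) x + x * deriv (gegenbauer lam (n + 1)) x)
        - ((n : ℝ) + 2 * lam) * deriv (gegenbauer lam n) x) / ((n : ℝ) + 2) := by
  have h₀ := (differentiable_gegenbauer lam n x).hasDerivAt
  have h₁ := (differentiable_gegenbauer lam (n + 1) x).hasDerivAt
  have h := ((((hasDerivAt_id x).const_mul (2 * ((n : ℝ) + 1 + lam))).mul h₁).sub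
    (h₀.const_mul ((n : ℝ) + 2 * lam))).div_const ((n : ℝ) + 2)
  rw [gegenbauer_add_two]
  exact (h.congr_deriv (by simp only [id, mul_one]; ring)).deriv

theorem deriv_gegenbauer_succ_relations (n : ℕ) (x : ℝ) :
    x * deriv (gegenbauer lam (n + 1)) x - deriv (gegenbauer lam n) x =
        ((n : ℝ) + 1) * gegenbauer lam (n + 1) x ∧
      deriv (gegenbauer lam (n + 1)) x - x * deriv (gegenbauer lam n) x =
        ((n : ℝ) + 2 * lam) * gegenbauer lam n x := by
  induction n with
  | zero =>
    simp only [zero_add, gegenbauer_one, deriv_const_mul_id', gegenbauer_zero, deriv_const',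
      sub_zero, CharP.cast_eq_zero, one_mul, mul_zero, mul_one, and_true]
    ring
  | succ n ih =>
    obtain ⟨hb, hc⟩ := ih
    have hn : (n : ℝ) + 2 ≠ 0 := by positivity
    have hC : ((n : ℝ) + 2) * gegenbauer lam (n + 2) x =
        2 * ((n : ℝ) + 1 + lam) * x * gegenbauer lam (n + 1) x
          - ((n : ℝ) + 2 * lam) * gegenbauer lam n x := by
      rw [gegenbauer_add_two]; field_simp
    have hD : ((n : ℝ) + 2) * deriv (gegenbauer lam (n + 2)) x =
        2 * ((n : ℝ) + 1 + lam) * (gegenbauer lam (n + 1) x + x * deriv (gegenbauer lam (n + 1)) x)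
          - ((n : ℝ) + 2 * lam) * deriv (gegenbauer lam n) x := by
      rw [deriv_gegenbauer_add_two]; field_simp
    have hc' : deriv (gegenbauer lam (n + 2)) x - x * deriv (gegenbauer lam (n + 1)) x =
        ((n : ℝ) + 1 + 2 * lam) * gegenbauer lam (n + 1) x := by
      refine mul_left_cancel₀ hn ?_
      linear_combination hD + ((n : ℝ) + 2 * lam) * hb
    refine ⟨?_, by push_cast; linear_combination hc'⟩
    refine mul_left_cancel₀ hn ?_
    push_cast
    linear_combination ((n : ℝ) + 2) * (x * hc' - hC - hc + x * hb)

theorem one_sub_sq_mul_deriv_gegenbauer_succ (n : ℕ) (x : ℝ) :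
    (1 - x ^ 2) * deriv (gegenbauer lam (n + 1)) x =
      ((n : ℝ) + 2 * lam) * gegenbauer lam n x - ((n : ℝ) + 1) * x * gegenbauer lam (n + 1) x := by
  obtain ⟨hb, hc⟩ := deriv_gegenbauer_succ_relations lam n x
  linear_combination hc - x * hb

theorem gegenbauer_ode (n : ℕ) (x : ℝ) :
    (1 - x ^ 2) * deriv (deriv (gegenbauer lam n)) x
      - (2 * lam + 1) * x * deriv (gegenbauer lam n) x
      + (n : ℝ) * ((n : ℝ) + 2 * lam) * gegenbauer lam n x = 0 := by
  cases n with
  | zero => simp [gegenbauer_zero]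
  | succ n =>
    have h₀ := (differentiable_gegenbauer lam n x).hasDerivAt
    have h₁ := (differentiable_gegenbauer lam (n + 1) x).hasDerivAt
    have h₂ := ((contDiff_gegenbauer lam (n + 1)).differentiable_deriv_two x).hasDerivAt
    have hL : HasDerivAt (fun y => (1 - y ^ 2) * deriv (gegenbauer lam (n + 1)) y)
        (-(2 * x) * deriv (gegenbauer lam (n + 1)) x
          + (1 - x ^ 2) * deriv (deriv (gegenbauer lam (n + 1))) x) x :=
      (((hasDerivAt_pow 2 x).const_sub 1).mul h₂).congr_deriv (by norm_num)
    have hR : HasDerivAt (fun y => (1 - y ^ 2) * deriv (gegenbauer lam (n + 1)) y)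
        (((n : ℝ) + 2 * lam) * deriv (gegenbauer lam n) x
          - ((n : ℝ) + 1) * (gegenbauer lam (n + 1) x + x * deriv (gegenbauer lam (n + 1)) x)) x := by
      rw [funext (one_sub_sq_mul_deriv_gegenbauer_succ lam n)]
      exact ((h₀.const_mul _).sub (((hasDerivAt_id x).const_mul _).mul h₁)).congr_deriv
        (by simp only [id, mul_one]; ring)
    have h := hL.unique hR
    obtain ⟨hb, -⟩ := deriv_gegenbauer_succ_relations lam n x
    push_cast
    linear_combination h - ((n : ℝ) + 2 * lam) * hb

end Gegenbauer

section UltrasphericalWeight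

variable {f : ℝ → ℝ} {lam K : ℝ}

theorem hasDerivAt_one_sub_sq_rpow_mul_deriv {z : ℝ} (hz : z ∈ Ioo (-1 : ℝ) 1)
    (hf : DifferentiableAt ℝ (deriv f) z)
    (hode : (1 - z ^ 2) * deriv (deriv f) z - (2 * lam + 1) * z * deriv f z + K * f z = 0) :
    HasDerivAt (fun y => (1 - y ^ 2) ^ (lam + 1 / 2) * deriv f y)
      (-(K * ((1 - z ^ 2) ^ (lam - 1 / 2) * f z))) z := by
  have hpos : 0 < 1 - z ^ 2 := by nlinarith [hz.1, hz.2]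
  have hw := ((hasDerivAt_pow 2 z).const_sub 1).rpow_const (p := lam + 1 / 2) (Or.inl hpos.ne')
  refine (hw.mul hf.hasDerivAt).congr_deriv ?_
  have hsplit : (1 - z ^ 2) ^ (lam + 1 / 2) = (1 - z ^ 2) ^ (lam - 1 / 2) * (1 - z ^ 2) := by
    rw [← Real.rpow_add_one hpos.ne']; congr 1; ring
  rw [hsplit, show lam + 1 / 2 - 1 = lam - 1 / 2 by ring]
  push_cast
  linear_combination (1 - z ^ 2) ^ (lam - 1 / 2) * hode

theorem intervalIntegrable_one_sub_sq_rpow_mul {a y : ℝ} {g : ℝ → ℝ} (ha : -1 < a)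
    (hy₁ : -1 < y) (hy₂ : y ≤ 1) (hg : ContinuousOn g (Icc y 1)) :
    IntervalIntegrable (fun z => (1 - z ^ 2) ^ a * g z) MeasureTheory.volume y 1 := by
  have hsing : IntervalIntegrable (fun z : ℝ => (1 - z) ^ a) MeasureTheory.volume y 1 := by
    simpa using (intervalIntegral.intervalIntegrable_rpow' (a := 1 - y) (b := 0) ha).comp_sub_left 1
  have hreg : ContinuousOn (fun z : ℝ => (1 + z) ^ a * g z) (uIcc y 1) := by
    rw [uIcc_of_le hy₂]
    refine ContinuousOn.mul (fun z hz => ?_) hg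
    exact (ContinuousAt.rpow_const (by fun_prop) (Or.inl (by linarith [hz.1]))).continuousWithinAt
  refine (intervalIntegrable_congr fun z hz => ?_).mp (hsing.mul_continuousOn hreg)
  rw [uIoc_of_le hy₂] at hz
  rw [show 1 - z ^ 2 = (1 - z) * (1 + z) by ring,
    Real.mul_rpow (by linarith [hz.2]) (by linarith [hz.1]), mul_assoc]

theorem integral_one_sub_sq_rpow_mul_of_ode (hlam : -1 / 2 < lam) (hK : K ≠ 0)
    (hf : ContDiff ℝ 2 f)
    (hode : ∀ z ∈ Ioo (-1 : ℝ) 1,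
      (1 - z ^ 2) * deriv (deriv f) z - (2 * lam + 1) * z * deriv f z + K * f z = 0)
    {y : ℝ} (hy : y ∈ Ioo (-1 : ℝ) 1) :
    ∫ z in y..1, (1 - z ^ 2) ^ (lam - 1 / 2) * f z =
      (1 - y ^ 2) ^ (lam + 1 / 2) * deriv f y / K := by
  have hflux : ∀ z ∈ Ioo y 1, HasDerivAt (fun y => (1 - y ^ 2) ^ (lam + 1 / 2) * deriv f y)
      (-(K * ((1 - z ^ 2) ^ (lam - 1 / 2) * f z))) z := fun z hz =>
    have hz' : z ∈ Ioo (-1 : ℝ) 1 := ⟨hy.1.trans hz.1, hz.2⟩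
    hasDerivAt_one_sub_sq_rpow_mul_deriv hz' (hf.differentiable_deriv_two z) (hode z hz')
  have hcont : ContinuousOn (fun y => (1 - y ^ 2) ^ (lam + 1 / 2) * deriv f y) (Icc y 1) :=
    (((by fun_prop : Continuous fun y : ℝ => 1 - y ^ 2).rpow_const
      fun _ => Or.inr (by linarith)).mul (hf.continuous_deriv one_le_two)).continuousOn
  have hint := ((intervalIntegrable_one_sub_sq_rpow_mul (a := lam - 1 / 2) (by linarith) hy.1
    hy.2.le hf.continuous.continuousOn).const_mul K).neg
  have hFTC := intervalIntegral.integral_eq_sub_of_hasDeriv_right_of_le hy.2.le hcont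
    (fun z hz => (hflux z hz).hasDerivWithinAt) hint
  have hvanish : ((1 : ℝ) - 1 ^ 2) ^ (lam + 1 / 2) = 0 := by
    rw [one_pow, sub_self, Real.zero_rpow (by linarith)]
  rw [intervalIntegral.integral_neg, intervalIntegral.integral_const_mul, hvanish, zero_mul,
    zero_sub, neg_inj] at hFTC
  rw [eq_div_iff hK, ← hFTC, mul_comm]

theorem iterated_integral_one_sub_sq_rpow_of_ode (hlam : -1 / 2 < lam) (hK : K ≠ 0)
    (hf : ContDiff ℝ 2 f)
    (hode : ∀ z ∈ Ioo (-1 : ℝ) 1,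
      (1 - z ^ 2) * deriv (deriv f) z - (2 * lam + 1) * z * deriv f z + K * f z = 0)
    {x : ℝ} (hx : x ∈ Ioo (-1 : ℝ) 1) :
    (∫ y in x..1, (1 - y ^ 2) ^ (-lam - 1 / 2) *
        ∫ z in y..1, (1 - z ^ 2) ^ (lam - 1 / 2) * f z) = (f 1 - f x) / K := by
  have hinner : EqOn (fun y => (1 - y ^ 2) ^ (-lam - 1 / 2) *
        ∫ z in y..1, (1 - z ^ 2) ^ (lam - 1 / 2) * f z) (fun y => deriv f y / K) (Ioo x 1) := by
    intro y hy
    have hy' : y ∈ Ioo (-1 : ℝ) 1 := ⟨hx.1.trans hy.1, hy.2⟩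
    have hpos : 0 < 1 - y ^ 2 := by nlinarith [hy'.1, hy'.2]
    simp only
    rw [integral_one_sub_sq_rpow_mul_of_ode hlam hK hf hode hy', ← mul_div_assoc, ← mul_assoc,
      ← Real.rpow_add hpos, show -lam - 1 / 2 + (lam + 1 / 2) = 0 by ring, Real.rpow_zero, one_mul]
  rw [intervalIntegral.integral_congr_Ioo_of_le hx.2.le hinner, intervalIntegral.integral_div,
    intervalIntegral.integral_deriv_eq_sub (fun y _ => hf.differentiable two_ne_zero y)
      ((hf.continuous_deriv one_le_two).intervalIntegrable x 1)]

end UltrasphericalWeight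

theorem iterated_integral_gegenbauer_right (lam : ℝ) (hlam : 0 < lam) (n : ℕ) (hn : 1 ≤ n)
    (x : ℝ) (hx : x ∈ Set.Ioo (-1 : ℝ) 1) :
    (∫ y in x..1, (1 - y ^ 2) ^ (-lam - 1 / 2) *
        ∫ z in y..1, (1 - z ^ 2) ^ (lam - 1 / 2) * gegenbauer lam n z) =
      (gegenbauer lam n 1 - gegenbauer lam n x) / ((n : ℝ) * ((n : ℝ) + 2 * lam)) := by
  have hK : (n : ℝ) * ((n : ℝ) + 2 * lam) ≠ 0 := by
    have : (0 : ℝ) < n := by exact_mod_cast hn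
    positivity
  exact iterated_integral_one_sub_sq_rpow_of_ode (by linarith) hK (contDiff_gegenbauer lam n)
    (fun z _ => gegenbauer_ode lam n z) hx
end
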